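/- Compatibility of downgrade and upgrade: assume either (n < m and p = precise) or (□ = ≲ and p = imprecise). Then (i) if Γ ⊢ t □ₙ t̲ : EmulDV_{m+d;p} then Γ ⊢ downgrade_{m;d} t □ₙ t̲ : EmulDV_{m;p}; and (ii) if Γ ⊢ t □ₙ t̲ : EmulDV_{m;p} then Γ ⊢ upgrade_{m;d} t □ₙ t̲ : EmulDV_{m+d;p}. -/

import Mathlib

set_option maxHeartbeats 1000000

namespace FAC

/-! ## Source language λτ : simply-typed CBV lambda calculus -/

inductive Ty : Type
  | unit : Ty
  | bool : Ty
  | arr (a b : Ty) : Ty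
  | prod (a b : Ty) : Ty
  | sum (a b : Ty) : Ty
deriving DecidableEq

inductive STm : Type
  | var (n : ℕ)
  | unit | tt | ff
  | lam (τ : Ty) (t : STm)
  | app (t₁ t₂ : STm)
  | pair (t₁ t₂ : STm)
  | p1 (t : STm)
  | p2 (t : STm)
  | inl (t : STm)
  | inr (t : STm)
  | caseOf (t t₁ t₂ : STm)   -- branches bind de Bruijn index 0
  | seq (t₁ t₂ : STm)
  | tif (t t₁ t₂ : STm)
  | fixt (a b : Ty) (t : STm)
deriving DecidableEq

inductive SIsVal : STm → Prop
  | unit : SIsVal .unit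
  | tt : SIsVal .tt
  | ff : SIsVal .ff
  | lam {τ t} : SIsVal (.lam τ t)
  | pair {t₁ t₂} : SIsVal t₁ → SIsVal t₂ → SIsVal (.pair t₁ t₂)
  | inl {t} : SIsVal t → SIsVal (.inl t)
  | inr {t} : SIsVal t → SIsVal (.inr t)

def liftR (f : ℕ → ℕ) : ℕ → ℕ
  | 0 => 0
  | n+1 => f n + 1

def STm.rename (f : ℕ → ℕ) : STm → STm
  | .var n => .var (f n)
  | .unit => .unit
  | .tt => .tt
  | .ff => .ff
  | .lam τ t => .lam τ (t.rename (liftR f))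
  | .app a b => .app (a.rename f) (b.rename f)
  | .pair a b => .pair (a.rename f) (b.rename f)
  | .p1 t => .p1 (t.rename f)
  | .p2 t => .p2 (t.rename f)
  | .inl t => .inl (t.rename f)
  | .inr t => .inr (t.rename f)
  | .caseOf t a b => .caseOf (t.rename f) (a.rename (liftR f)) (b.rename (liftR f))
  | .seq a b => .seq (a.rename f) (b.rename f)
  | .tif t a b => .tif (t.rename f) (a.rename f) (b.rename f)
  | .fixt a b t => .fixt a b (t.rename f)

def liftS (σ : ℕ → STm) : ℕ → STm
  | 0 => .var 0
  | n+1 => (σ n).rename Nat.succ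

def STm.subst (σ : ℕ → STm) : STm → STm
  | .var n => σ n
  | .unit => .unit
  | .tt => .tt
  | .ff => .ff
  | .lam τ t => .lam τ (t.subst (liftS σ))
  | .app a b => .app (a.subst σ) (b.subst σ)
  | .pair a b => .pair (a.subst σ) (b.subst σ)
  | .p1 t => .p1 (t.subst σ)
  | .p2 t => .p2 (t.subst σ)
  | .inl t => .inl (t.subst σ)
  | .inr t => .inr (t.subst σ)
  | .caseOf t a b => .caseOf (t.subst σ) (a.subst (liftS σ)) (b.subst (liftS σ))
  | .seq a b => .seq (a.subst σ) (b.subst σ)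
  | .tif t a b => .tif (t.subst σ) (a.subst σ) (b.subst σ)
  | .fixt a b t => .fixt a b (t.subst σ)

/-- substitute `v` for de Bruijn index 0 in `t` -/
def STm.subst0 (t v : STm) : STm :=
  t.subst (fun n => match n with | 0 => v | n+1 => .var n)

/-- Typing judgement for λτ. -/
inductive HasTy : List Ty → STm → Ty → Prop
  | var {Γ n τ} : Γ[n]? = some τ → HasTy Γ (.var n) τ
  | unit {Γ} : HasTy Γ .unit .unit
  | tt {Γ} : HasTy Γ .tt .bool
  | ff {Γ} : HasTy Γ .ff .bool
  | lam {Γ τ τ' t} : HasTy (τ :: Γ) t τ' → HasTy Γ (.lam τ t) (.arr τ τ')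
  | app {Γ t t' τ τ'} : HasTy Γ t (.arr τ' τ) → HasTy Γ t' τ' → HasTy Γ (.app t t') τ
  | pair {Γ t₁ t₂ τ₁ τ₂} : HasTy Γ t₁ τ₁ → HasTy Γ t₂ τ₂ → HasTy Γ (.pair t₁ t₂) (.prod τ₁ τ₂)
  | p1 {Γ t τ₁ τ₂} : HasTy Γ t (.prod τ₁ τ₂) → HasTy Γ (.p1 t) τ₁
  | p2 {Γ t τ₁ τ₂} : HasTy Γ t (.prod τ₁ τ₂) → HasTy Γ (.p2 t) τ₂
  | inl {Γ t τ₁ τ₂} : HasTy Γ t τ₁ → HasTy Γ (.inl t) (.sum τ₁ τ₂)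
  | inr {Γ t τ₁ τ₂} : HasTy Γ t τ₂ → HasTy Γ (.inr t) (.sum τ₁ τ₂)
  | caseOf {Γ t t₁ t₂ τ₁ τ₂ τ} : HasTy Γ t (.sum τ₁ τ₂) →
      HasTy (τ₁ :: Γ) t₁ τ → HasTy (τ₂ :: Γ) t₂ τ → HasTy Γ (.caseOf t t₁ t₂) τ
  | seq {Γ t₁ t₂ τ} : HasTy Γ t₁ .unit → HasTy Γ t₂ τ → HasTy Γ (.seq t₁ t₂) τ
  | tif {Γ t t₁ t₂ τ} : HasTy Γ t .bool → HasTy Γ t₁ τ → HasTy Γ t₂ τ →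
      HasTy Γ (.tif t t₁ t₂) τ
  | fixt {Γ t a b} : HasTy Γ t (.arr (.arr a b) (.arr a b)) → HasTy Γ (.fixt a b t) (.arr a b)

/-- Small-step CBV reduction for λτ (evaluation contexts are rendered as
congruence rules enforcing left-to-right call-by-value order). -/
inductive SStep : STm → STm → Prop
  | app1 {t₁ t₁' t₂} : SStep t₁ t₁' → SStep (.app t₁ t₂) (.app t₁' t₂)
  | app2 {v t t'} : SIsVal v → SStep t t' → SStep (.app v t) (.app v t')
  | beta {τ t v} : SIsVal v → SStep (.app (.lam τ t) v) (t.subst0 v)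
  | pair1 {t₁ t₁' t₂} : SStep t₁ t₁' → SStep (.pair t₁ t₂) (.pair t₁' t₂)
  | pair2 {v t t'} : SIsVal v → SStep t t' → SStep (.pair v t) (.pair v t')
  | p1C {t t'} : SStep t t' → SStep (.p1 t) (.p1 t')
  | p2C {t t'} : SStep t t' → SStep (.p2 t) (.p2 t')
  | p1V {v₁ v₂} : SIsVal v₁ → SIsVal v₂ → SStep (.p1 (.pair v₁ v₂)) v₁
  | p2V {v₁ v₂} : SIsVal v₁ → SIsVal v₂ → SStep (.p2 (.pair v₁ v₂)) v₂
  | inlC {t t'} : SStep t t' → SStep (.inl t) (.inl t')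
  | inrC {t t'} : SStep t t' → SStep (.inr t) (.inr t')
  | caseC {t t' t₁ t₂} : SStep t t' → SStep (.caseOf t t₁ t₂) (.caseOf t' t₁ t₂)
  | caseL {v t₁ t₂} : SIsVal v → SStep (.caseOf (.inl v) t₁ t₂) (t₁.subst0 v)
  | caseR {v t₁ t₂} : SIsVal v → SStep (.caseOf (.inr v) t₁ t₂) (t₂.subst0 v)
  | seqC {t₁ t₁' t₂} : SStep t₁ t₁' → SStep (.seq t₁ t₂) (.seq t₁' t₂)
  | seqN {t} : SStep (.seq .unit t) t
  | tifC {t t' t₁ t₂} : SStep t t' → SStep (.tif t t₁ t₂) (.tif t' t₁ t₂)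
  | tifT {t₁ t₂} : SStep (.tif .tt t₁ t₂) t₁
  | tifF {t₁ t₂} : SStep (.tif .ff t₁ t₂) t₂
  | fixC {a b t t'} : SStep t t' → SStep (.fixt a b t) (.fixt a b t')
  | fixBeta {a b t} :
      SStep (.fixt a b (.lam (.arr a b) t))
        (t.subst0 (.lam a (.app ((STm.fixt a b (.lam (.arr a b) t)).rename Nat.succ) (.var 0))))

def SStepN : ℕ → STm → STm → Prop
  | 0, t, t' => t = t'
  | n+1, t, t'' => ∃ t', SStep t t' ∧ SStepN n t' t''

def SStepStar (t t' : STm) : Prop := ∃ n, SStepN n t t'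

/-- termination with a value -/
def SHalts (t : STm) : Prop := ∃ n v, SStepN n t v ∧ SIsVal v

end FAC
/-! ## Target language λu : untyped CBV lambda calculus with `wrong` -/

namespace FAC

inductive UTm : Type
  | var (n : ℕ)
  | unit | tt | ff
  | lam (t : UTm)
  | app (t₁ t₂ : UTm)
  | pair (t₁ t₂ : UTm)
  | p1 (t : UTm)
  | p2 (t : UTm)
  | inl (t : UTm)
  | inr (t : UTm)
  | caseOf (t t₁ t₂ : UTm)
  | seq (t₁ t₂ : UTm)
  | tif (t t₁ t₂ : UTm)
  | wrong
deriving DecidableEq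

inductive UIsVal : UTm → Prop
  | unit : UIsVal .unit
  | tt : UIsVal .tt
  | ff : UIsVal .ff
  | lam {t} : UIsVal (.lam t)
  | pair {t₁ t₂} : UIsVal t₁ → UIsVal t₂ → UIsVal (.pair t₁ t₂)
  | inl {t} : UIsVal t → UIsVal (.inl t)
  | inr {t} : UIsVal t → UIsVal (.inr t)

def UTm.rename (f : ℕ → ℕ) : UTm → UTm
  | .var n => .var (f n)
  | .unit => .unit
  | .tt => .tt
  | .ff => .ff
  | .lam t => .lam (t.rename (liftR f))
  | .app a b => .app (a.rename f) (b.rename f)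
  | .pair a b => .pair (a.rename f) (b.rename f)
  | .p1 t => .p1 (t.rename f)
  | .p2 t => .p2 (t.rename f)
  | .inl t => .inl (t.rename f)
  | .inr t => .inr (t.rename f)
  | .caseOf t a b => .caseOf (t.rename f) (a.rename (liftR f)) (b.rename (liftR f))
  | .seq a b => .seq (a.rename f) (b.rename f)
  | .tif t a b => .tif (t.rename f) (a.rename f) (b.rename f)
  | .wrong => .wrong

def liftU (σ : ℕ → UTm) : ℕ → UTm
  | 0 => .var 0
  | n+1 => (σ n).rename Nat.succ

def UTm.subst (σ : ℕ → UTm) : UTm → UTm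
  | .var n => σ n
  | .unit => .unit
  | .tt => .tt
  | .ff => .ff
  | .lam t => .lam (t.subst (liftU σ))
  | .app a b => .app (a.subst σ) (b.subst σ)
  | .pair a b => .pair (a.subst σ) (b.subst σ)
  | .p1 t => .p1 (t.subst σ)
  | .p2 t => .p2 (t.subst σ)
  | .inl t => .inl (t.subst σ)
  | .inr t => .inr (t.subst σ)
  | .caseOf t a b => .caseOf (t.subst σ) (a.subst (liftU σ)) (b.subst (liftU σ))
  | .seq a b => .seq (a.subst σ) (b.subst σ)
  | .tif t a b => .tif (t.subst σ) (a.subst σ) (b.subst σ)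
  | .wrong => .wrong

def UTm.subst0 (t v : UTm) : UTm :=
  t.subst (fun n => match n with | 0 => v | n+1 => .var n)

/-- Well-scopedness: all free variables are `< n`. -/
def UTm.ws : UTm → ℕ → Prop
  | .var m, n => m < n
  | .unit, _ => True
  | .tt, _ => True
  | .ff, _ => True
  | .lam t, n => t.ws (n+1)
  | .app a b, n => a.ws n ∧ b.ws n
  | .pair a b, n => a.ws n ∧ b.ws n
  | .p1 t, n => t.ws n
  | .p2 t, n => t.ws n
  | .inl t, n => t.ws n
  | .inr t, n => t.ws n
  | .caseOf t a b, n => t.ws n ∧ a.ws (n+1) ∧ b.ws (n+1)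
  | .seq a b, n => a.ws n ∧ b.ws n
  | .tif t a b, n => t.ws n ∧ a.ws n ∧ b.ws n
  | .wrong, _ => True

/-- Small-step CBV reduction for λu, with propagation of `wrong` out of any
non-trivial evaluation context and ill-typed eliminations stepping to `wrong`. -/
inductive UStep : UTm → UTm → Prop
  | app1 {t₁ t₁' t₂} : UStep t₁ t₁' → UStep (.app t₁ t₂) (.app t₁' t₂)
  | app2 {v t t'} : UIsVal v → UStep t t' → UStep (.app v t) (.app v t')
  | beta {t v} : UIsVal v → UStep (.app (.lam t) v) (t.subst0 v)
  | appW1 {t} : UStep (.app .wrong t) .wrong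
  | appW2 {v} : UIsVal v → UStep (.app v .wrong) .wrong
  | appWrong {v₁ v₂} : UIsVal v₁ → UIsVal v₂ → (∀ t, v₁ ≠ .lam t) → UStep (.app v₁ v₂) .wrong
  | pair1 {t₁ t₁' t₂} : UStep t₁ t₁' → UStep (.pair t₁ t₂) (.pair t₁' t₂)
  | pair2 {v t t'} : UIsVal v → UStep t t' → UStep (.pair v t) (.pair v t')
  | pairW1 {t} : UStep (.pair .wrong t) .wrong
  | pairW2 {v} : UIsVal v → UStep (.pair v .wrong) .wrong
  | p1C {t t'} : UStep t t' → UStep (.p1 t) (.p1 t')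
  | p2C {t t'} : UStep t t' → UStep (.p2 t) (.p2 t')
  | p1W : UStep (.p1 .wrong) .wrong
  | p2W : UStep (.p2 .wrong) .wrong
  | p1V {v₁ v₂} : UIsVal v₁ → UIsVal v₂ → UStep (.p1 (.pair v₁ v₂)) v₁
  | p2V {v₁ v₂} : UIsVal v₁ → UIsVal v₂ → UStep (.p2 (.pair v₁ v₂)) v₂
  | p1Wrong {v} : UIsVal v → (∀ a b, v ≠ .pair a b) → UStep (.p1 v) .wrong
  | p2Wrong {v} : UIsVal v → (∀ a b, v ≠ .pair a b) → UStep (.p2 v) .wrong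
  | inlC {t t'} : UStep t t' → UStep (.inl t) (.inl t')
  | inrC {t t'} : UStep t t' → UStep (.inr t) (.inr t')
  | inlW : UStep (.inl .wrong) .wrong
  | inrW : UStep (.inr .wrong) .wrong
  | caseC {t t' t₁ t₂} : UStep t t' → UStep (.caseOf t t₁ t₂) (.caseOf t' t₁ t₂)
  | caseW {t₁ t₂} : UStep (.caseOf .wrong t₁ t₂) .wrong
  | caseL {v t₁ t₂} : UIsVal v → UStep (.caseOf (.inl v) t₁ t₂) (t₁.subst0 v)
  | caseR {v t₁ t₂} : UIsVal v → UStep (.caseOf (.inr v) t₁ t₂) (t₂.subst0 v)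
  | caseWrong {v t₁ t₂} : UIsVal v → (∀ w, v ≠ .inl w) → (∀ w, v ≠ .inr w) →
      UStep (.caseOf v t₁ t₂) .wrong
  | seqC {t₁ t₁' t₂} : UStep t₁ t₁' → UStep (.seq t₁ t₂) (.seq t₁' t₂)
  | seqW {t} : UStep (.seq .wrong t) .wrong
  | seqN {t} : UStep (.seq .unit t) t
  | seqWrong {v t} : UIsVal v → v ≠ .unit → UStep (.seq v t) .wrong
  | tifC {t t' t₁ t₂} : UStep t t' → UStep (.tif t t₁ t₂) (.tif t' t₁ t₂)
  | tifW {t₁ t₂} : UStep (.tif .wrong t₁ t₂) .wrong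
  | tifT {t₁ t₂} : UStep (.tif .tt t₁ t₂) t₁
  | tifF {t₁ t₂} : UStep (.tif .ff t₁ t₂) t₂
  | tifWrong {v t₁ t₂} : UIsVal v → v ≠ .tt → v ≠ .ff → UStep (.tif v t₁ t₂) .wrong

def UStepN : ℕ → UTm → UTm → Prop
  | 0, t, t' => t = t'
  | n+1, t, t'' => ∃ t', UStep t t' ∧ UStepN n t' t''

def UStepStar (t t' : UTm) : Prop := ∃ n, UStepN n t t'

def UStepPlus (t t' : UTm) : Prop := ∃ n, 0 < n ∧ UStepN n t t'

/-- termination with a value (`wrong` is not a value) -/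
def UHalts (t : UTm) : Prop := ∃ n v, UStepN n t v ∧ UIsVal v

end FAC
/-! ## Type erasure and the Z combinator -/

namespace FAC

/-- the Z (call-by-value Y) combinator: `λf.(λx. f (λy. x x y)) (λx. f (λy. x x y))` -/
def Zcomb : UTm :=
  .lam (.app
    (.lam (.app (.var 1) (.lam (.app (.app (.var 1) (.var 1)) (.var 0)))))
    (.lam (.app (.var 1) (.lam (.app (.app (.var 1) (.var 1)) (.var 0))))))

/-- `λx. f (λy. x x y)`, for a given (closed) `f` -/
def gOf (f : UTm) : UTm :=
  .lam (.app (f.rename Nat.succ) (.lam (.app (.app (.var 1) (.var 1)) (.var 0))))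

/-- Type erasure from λτ to λu; `fix` is mapped to the Z combinator. -/
def erase : STm → UTm
  | .var n => .var n
  | .unit => .unit
  | .tt => .tt
  | .ff => .ff
  | .lam _ t => .lam (erase t)
  | .app a b => .app (erase a) (erase b)
  | .pair a b => .pair (erase a) (erase b)
  | .p1 t => .p1 (erase t)
  | .p2 t => .p2 (erase t)
  | .inl t => .inl (erase t)
  | .inr t => .inr (erase t)
  | .caseOf t a b => .caseOf (erase t) (erase a) (erase b)
  | .seq a b => .seq (erase a) (erase b)
  | .tif t a b => .tif (erase t) (erase a) (erase b)
  | .fixt _ _ t => .app Zcomb (erase t)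

/-! ## Dynamic type-checking wrappers protect/confine -/

/-- `wrap τ true = protect_τ`, `wrap τ false = confine_τ`. -/
def wrap : Ty → Bool → UTm
  | .unit, true => .lam (.var 0)
  | .bool, true => .lam (.var 0)
  | .unit, false => .lam (.seq (.var 0) .unit)
  | .bool, false => .lam (.tif (.var 0) .tt .ff)
  | .prod a b, p => .lam (.pair (.app (wrap a p) (.p1 (.var 0))) (.app (wrap b p) (.p2 (.var 0))))
  | .sum a b, p => .lam (.caseOf (.var 0)
      (.inl (.app (wrap a p) (.var 0)))
      (.inr (.app (wrap b p) (.var 0))))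
  | .arr a b, p => .lam (.lam (.app (wrap b p) (.app (.var 1) (.app (wrap a (!p)) (.var 0)))))

def protect (τ : Ty) : UTm := wrap τ true
def confine (τ : Ty) : UTm := wrap τ false

/-- the compiler: protect the erased term -/
def compile (τ : Ty) (t : STm) : UTm := .app (protect τ) (erase t)

/-! ## UVal and its tools -/

/-- the family of λτ types UVal_n -/
def UValTy : ℕ → Ty
  | 0 => .unit
  | n+1 => .sum .unit (.sum .unit (.sum .bool (.sum (.prod (UValTy n) (UValTy n))
      (.sum (.sum (UValTy n) (UValTy n)) (.arr (UValTy n) (UValTy n))))))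

def inUnk : STm := .inl .unit
def inUnit (v : STm) : STm := .inr (.inl v)
def inBool (v : STm) : STm := .inr (.inr (.inl v))
def inProd (v : STm) : STm := .inr (.inr (.inr (.inl v)))
def inSum (v : STm) : STm := .inr (.inr (.inr (.inr (.inl v))))
def inArr (v : STm) : STm := .inr (.inr (.inr (.inr (.inr v))))

def unkUVal : ℕ → STm
  | 0 => .unit
  | _+1 => inUnk

/-- the diverging term `omega_τ = fix_{Unit→τ} (λx:Unit→τ. x) unit` -/
def omegaTm (τ : Ty) : STm :=
  .app (.fixt .unit τ (.lam (.arr .unit τ) (.var 0))) .unit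

/-- `caseUVal_{Unit;n} : UVal_{n+1} → Unit` -/
def caseUnitU (n : ℕ) : STm :=
  .lam (UValTy (n+1)) (.caseOf (.var 0) (omegaTm .unit)
    (.caseOf (.var 0) (.var 0) (omegaTm .unit)))

def caseBoolU (n : ℕ) : STm :=
  .lam (UValTy (n+1)) (.caseOf (.var 0) (omegaTm .bool)
    (.caseOf (.var 0) (omegaTm .bool)
      (.caseOf (.var 0) (.var 0) (omegaTm .bool))))

def caseProdU (n : ℕ) : STm :=
  .lam (UValTy (n+1)) (.caseOf (.var 0) (omegaTm (.prod (UValTy n) (UValTy n)))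
    (.caseOf (.var 0) (omegaTm (.prod (UValTy n) (UValTy n)))
      (.caseOf (.var 0) (omegaTm (.prod (UValTy n) (UValTy n)))
        (.caseOf (.var 0) (.var 0) (omegaTm (.prod (UValTy n) (UValTy n)))))))

def caseSumU (n : ℕ) : STm :=
  .lam (UValTy (n+1)) (.caseOf (.var 0) (omegaTm (.sum (UValTy n) (UValTy n)))
    (.caseOf (.var 0) (omegaTm (.sum (UValTy n) (UValTy n)))
      (.caseOf (.var 0) (omegaTm (.sum (UValTy n) (UValTy n)))
        (.caseOf (.var 0) (omegaTm (.sum (UValTy n) (UValTy n)))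
          (.caseOf (.var 0) (.var 0) (omegaTm (.sum (UValTy n) (UValTy n))))))))

/-- `caseUVal_{→;n} : UVal_{n+1} → UVal_n → UVal_n` -/
def caseArrU (n : ℕ) : STm :=
  .lam (UValTy (n+1)) (.lam (UValTy n)
    (.caseOf (.var 1) (omegaTm (UValTy n))
      (.caseOf (.var 0) (omegaTm (UValTy n))
        (.caseOf (.var 0) (omegaTm (UValTy n))
          (.caseOf (.var 0) (omegaTm (UValTy n))
            (.caseOf (.var 0) (omegaTm (UValTy n))
              (.app (.var 0) (.var 5))))))))

/-- `updown d true n = upgrade_{n;d} : UVal_n → UVal_{n+d}`,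
    `updown d false n = downgrade_{n;d} : UVal_{n+d} → UVal_n`. -/
def updown (d : ℕ) : Bool → ℕ → STm
  | up, 0 => if up then .lam (UValTy 0) (unkUVal d) else .lam (UValTy d) (unkUVal 0)
  | up, n+1 =>
    let sm := updown d up n
    let op := updown d (!up) n
    let aTy := if up then UValTy (n+1) else UValTy (n+d+1)
    let zTy := if up then UValTy (n+d) else UValTy n
    .lam aTy (.caseOf (.var 0) inUnk
      (.caseOf (.var 0) (inUnit (.var 0))
        (.caseOf (.var 0) (inBool (.var 0))
          (.caseOf (.var 0)
            (inProd (.pair (.app sm (.p1 (.var 0))) (.app sm (.p2 (.var 0)))))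
            (.caseOf (.var 0)
              (inSum (.caseOf (.var 0) (.inl (.app sm (.var 0))) (.inr (.app sm (.var 0)))))
              (inArr (.lam zTy (.app sm (.app (.var 1) (.app op (.var 0)))))))))))

def upgrade (n d : ℕ) : STm := updown d true n
def downgrade (n d : ℕ) : STm := updown d false n

/-! ## inject / extract -/

/-- `(injext n τ).1 = inject_{τ;n} : τ → UVal_n` and
    `(injext n τ).2 = extract_{τ;n} : UVal_n → τ`. -/
def injext : ℕ → Ty → STm × STm
  | 0, τ => (.lam τ (omegaTm (UValTy 0)), .lam (UValTy 0) (omegaTm τ))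
  | n+1, τ =>
    match τ with
    | .unit => (.lam .unit (inUnit (.var 0)), caseUnitU n)
    | .bool => (.lam .bool (inBool (.var 0)), caseBoolU n)
    | .prod a b =>
      (.lam (.prod a b) (inProd (.pair
          (.app (injext n a).1 (.p1 (.var 0)))
          (.app (injext n b).1 (.p2 (.var 0))))),
       .lam (UValTy (n+1)) (.pair
          (.app (injext n a).2 (.p1 (.app (caseProdU n) (.var 0))))
          (.app (injext n b).2 (.p2 (.app (caseProdU n) (.var 0))))))
    | .sum a b =>
      (.lam (.sum a b) (inSum (.caseOf (.var 0)
          (.inl (.app (injext n a).1 (.var 0)))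
          (.inr (.app (injext n b).1 (.var 0))))),
       .lam (UValTy (n+1)) (.caseOf (.app (caseSumU n) (.var 0))
          (.inl (.app (injext n a).2 (.var 0)))
          (.inr (.app (injext n b).2 (.var 0)))))
    | .arr a b =>
      (.lam (.arr a b) (inArr (.lam (UValTy n)
          (.app (injext n b).1 (.app (.var 1) (.app (injext n a).2 (.var 0)))))),
       .lam (UValTy (n+1)) (.lam a
          (.app (injext n b).2
            (.app (.app (caseArrU n) (.var 1)) (.app (injext n a).1 (.var 0))))))

def injectTm (n : ℕ) (τ : Ty) : STm := (injext n τ).1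
def extractTm (n : ℕ) (τ : Ty) : STm := (injext n τ).2

end FAC
/-! ## Emulation of λu terms in UVal_n -/

namespace FAC

/-- `emulate n t̲` : the approximate back-translation of a λu term into a λτ term
of type `UVal_n`. -/
def emulate (n : ℕ) : UTm → STm
  | .var i => .var i
  | .unit => .app (downgrade n 1) (inUnit .unit)
  | .tt => .app (downgrade n 1) (inBool .tt)
  | .ff => .app (downgrade n 1) (inBool .ff)
  | .lam t => .app (downgrade n 1) (inArr (.lam (UValTy n) (emulate n t)))
  | .app t₁ t₂ =>
      .app (.app (caseArrU n) (.app (upgrade n 1) (emulate n t₁))) (emulate n t₂)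
  | .pair t₁ t₂ => .app (downgrade n 1) (inProd (.pair (emulate n t₁) (emulate n t₂)))
  | .p1 t => .p1 (.app (caseProdU n) (.app (upgrade n 1) (emulate n t)))
  | .p2 t => .p2 (.app (caseProdU n) (.app (upgrade n 1) (emulate n t)))
  | .inl t => .app (downgrade n 1) (inSum (.inl (emulate n t)))
  | .inr t => .app (downgrade n 1) (inSum (.inr (emulate n t)))
  | .caseOf t t₁ t₂ =>
      .caseOf (.app (caseSumU n) (.app (upgrade n 1) (emulate n t)))
        (emulate n t₁) (emulate n t₂)
  | .seq t₁ t₂ => .seq (.app (caseUnitU n) (.app (upgrade n 1) (emulate n t₁))) (emulate n t₂)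
  | .tif t t₁ t₂ =>
      .tif (.app (caseBoolU n) (.app (upgrade n 1) (emulate n t)))
        (emulate n t₁) (emulate n t₂)
  | .wrong => omegaTm (UValTy n)

/-! ## Pseudo-types -/

inductive Prec : Type
  | precise | imprecise
deriving DecidableEq

/-- pseudo-types: λτ types together with the token type `EmulDV_{n;p}` -/
inductive PTy : Type
  | unit : PTy
  | bool : PTy
  | arr (a b : PTy) : PTy
  | prod (a b : PTy) : PTy
  | sum (a b : PTy) : PTy
  | emul (n : ℕ) (p : Prec) : PTy
deriving DecidableEq

/-- conversion of pseudo-types to λτ types: `EmulDV_{n;p}` becomes `UVal_n` -/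
def repEmul : PTy → Ty
  | .unit => .unit
  | .bool => .bool
  | .arr a b => .arr (repEmul a) (repEmul b)
  | .prod a b => .prod (repEmul a) (repEmul b)
  | .sum a b => .sum (repEmul a) (repEmul b)
  | .emul n _ => UValTy n

/-- embedding of λτ types into pseudo-types -/
def Ty.toP : Ty → PTy
  | .unit => .unit
  | .bool => .bool
  | .arr a b => .arr a.toP b.toP
  | .prod a b => .prod a.toP b.toP
  | .sum a b => .sum a.toP b.toP

def PTy.weight : PTy → ℕ
  | .unit => 1
  | .bool => 1
  | .arr a b => a.weight + b.weight + 1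
  | .prod a b => a.weight + b.weight + 1
  | .sum a b => a.weight + b.weight + 1
  | .emul n _ => 2 * 3 ^ n

/-! ## Evaluation contexts -/

inductive SEC : Type
  | hole
  | appL (C : SEC) (t : STm)
  | appR (v : STm) (C : SEC)
  | pairL (C : SEC) (t : STm)
  | pairR (v : STm) (C : SEC)
  | p1 (C : SEC)
  | p2 (C : SEC)
  | inl (C : SEC)
  | inr (C : SEC)
  | caseOf (C : SEC) (t₁ t₂ : STm)
  | seq (C : SEC) (t : STm)
  | tif (C : SEC) (t₁ t₂ : STm)
  | fixt (a b : Ty) (C : SEC)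

def SEC.ok : SEC → Prop
  | .hole => True
  | .appL C _ => C.ok
  | .appR v C => SIsVal v ∧ C.ok
  | .pairL C _ => C.ok
  | .pairR v C => SIsVal v ∧ C.ok
  | .p1 C => C.ok
  | .p2 C => C.ok
  | .inl C => C.ok
  | .inr C => C.ok
  | .caseOf C _ _ => C.ok
  | .seq C _ => C.ok
  | .tif C _ _ => C.ok
  | .fixt _ _ C => C.ok

def SEC.plug : SEC → STm → STm
  | .hole, t => t
  | .appL C u, t => .app (C.plug t) u
  | .appR v C, t => .app v (C.plug t)
  | .pairL C u, t => .pair (C.plug t) u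
  | .pairR v C, t => .pair v (C.plug t)
  | .p1 C, t => .p1 (C.plug t)
  | .p2 C, t => .p2 (C.plug t)
  | .inl C, t => .inl (C.plug t)
  | .inr C, t => .inr (C.plug t)
  | .caseOf C a b, t => .caseOf (C.plug t) a b
  | .seq C u, t => .seq (C.plug t) u
  | .tif C a b, t => .tif (C.plug t) a b
  | .fixt a b C, t => .fixt a b (C.plug t)

inductive UEC : Type
  | hole
  | appL (C : UEC) (t : UTm)
  | appR (v : UTm) (C : UEC)
  | pairL (C : UEC) (t : UTm)
  | pairR (v : UTm) (C : UEC)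
  | p1 (C : UEC)
  | p2 (C : UEC)
  | inl (C : UEC)
  | inr (C : UEC)
  | caseOf (C : UEC) (t₁ t₂ : UTm)
  | seq (C : UEC) (t : UTm)
  | tif (C : UEC) (t₁ t₂ : UTm)

def UEC.ok : UEC → Prop
  | .hole => True
  | .appL C _ => C.ok
  | .appR v C => UIsVal v ∧ C.ok
  | .pairL C _ => C.ok
  | .pairR v C => UIsVal v ∧ C.ok
  | .p1 C => C.ok
  | .p2 C => C.ok
  | .inl C => C.ok
  | .inr C => C.ok
  | .caseOf C _ _ => C.ok
  | .seq C _ => C.ok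
  | .tif C _ _ => C.ok

def UEC.plug : UEC → UTm → UTm
  | .hole, t => t
  | .appL C u, t => .app (C.plug t) u
  | .appR v C, t => .app v (C.plug t)
  | .pairL C u, t => .pair (C.plug t) u
  | .pairR v C, t => .pair v (C.plug t)
  | .p1 C, t => .p1 (C.plug t)
  | .p2 C, t => .p2 (C.plug t)
  | .inl C, t => .inl (C.plug t)
  | .inr C, t => .inr (C.plug t)
  | .caseOf C a b, t => .caseOf (C.plug t) a b
  | .seq C u, t => .seq (C.plug t) u
  | .tif C a b, t => .tif (C.plug t) a b

end FAC
/-! ## The step-indexed, asymmetric, cross-language logical relations -/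

namespace FAC

/-- direction of approximation: `lt` is ≲ and `gt` is ≳ -/
inductive Dir : Type
  | lt | gt
deriving DecidableEq

/-- the observation relation `O(W)_□` on worlds `W = (k)` -/
def Obs (dir : Dir) (k : ℕ) (ts : STm) (tu : UTm) : Prop :=
  match dir with
  | .lt => (∃ m ≤ k, ∃ v, SStepN m ts v ∧ SIsVal v) → UHalts tu
  | .gt => (∃ m ≤ k, ∃ v, UStepN m tu v ∧ UIsVal v) → SHalts ts

/-- The value relation `(W, vs, vu) ∈ V⟦τ̂⟧_dir`, defined by well-founded
recursion on the lexicographic pair (world level, weight of the pseudo-type).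
The term and continuation relations of the biorthogonal definition are
inlined at the recursive occurrences. -/
def ValRel (dir : Dir) (k : ℕ) (τ : PTy) (vs : STm) (vu : UTm) : Prop :=
  match τ with
  | .unit => HasTy [] vs .unit ∧ vu.ws 0 ∧ vs = .unit ∧ vu = .unit
  | .bool => HasTy [] vs .bool ∧ vu.ws 0 ∧
      ((vs = .tt ∧ vu = .tt) ∨ (vs = .ff ∧ vu = .ff))
  | .prod a b =>
      HasTy [] vs (repEmul (.prod a b)) ∧ vu.ws 0 ∧
      ∃ v₁ v₂ u₁ u₂, vs = .pair v₁ v₂ ∧ vu = .pair u₁ u₂ ∧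
        SIsVal v₁ ∧ SIsVal v₂ ∧ UIsVal u₁ ∧ UIsVal u₂ ∧
        (∀ j, j + 1 ≤ k → ValRel dir j a v₁ u₁ ∧ ValRel dir j b v₂ u₂)
  | .sum a b =>
      HasTy [] vs (repEmul (.sum a b)) ∧ vu.ws 0 ∧
      ((∃ v u, vs = .inl v ∧ vu = .inl u ∧ SIsVal v ∧ UIsVal u ∧
          (∀ j, j + 1 ≤ k → ValRel dir j a v u)) ∨
       (∃ v u, vs = .inr v ∧ vu = .inr u ∧ SIsVal v ∧ UIsVal u ∧
          (∀ j, j + 1 ≤ k → ValRel dir j b v u)))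
  | .arr a b =>
      HasTy [] vs (repEmul (.arr a b)) ∧ vu.ws 0 ∧
      ∃ ts tu, vs = .lam (repEmul a) ts ∧ vu = .lam tu ∧
        ∀ j, j < k → ∀ vs' vu', SIsVal vs' → UIsVal vu' → ValRel dir j a vs' vu' →
          -- inlined term relation at type b, world j
          ∀ Cs Cu, SEC.ok Cs → UEC.ok Cu →
            (∀ i, i ≤ j → ∀ ws wu, SIsVal ws → UIsVal wu → ValRel dir i b ws wu →
              Obs dir i (Cs.plug ws) (Cu.plug wu)) →
            Obs dir j (Cs.plug (ts.subst0 vs')) (Cu.plug (tu.subst0 vu'))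
  | .emul 0 p => HasTy [] vs (UValTy 0) ∧ vu.ws 0 ∧ vs = .unit ∧ p = .imprecise
  | .emul (n+1) p =>
      HasTy [] vs (UValTy (n+1)) ∧ vu.ws 0 ∧
      ((vs = inUnk ∧ p = .imprecise) ∨
       (∃ v, vs = inUnit v ∧ ValRel dir k .unit v vu) ∨
       (∃ v, vs = inBool v ∧ ValRel dir k .bool v vu) ∨
       (∃ v, vs = inProd v ∧ ValRel dir k (.prod (.emul n p) (.emul n p)) v vu) ∨
       (∃ v, vs = inSum v ∧ ValRel dir k (.sum (.emul n p) (.emul n p)) v vu) ∨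
       (∃ v, vs = inArr v ∧ ValRel dir k (.arr (.emul n p) (.emul n p)) v vu))
termination_by (k, τ.weight)
decreasing_by
  all_goals simp_wf
  all_goals try (exact Prod.Lex.left _ _ (by omega))
  all_goals
    refine Prod.Lex.right _ ?_
  all_goals simp [PTy.weight, pow_succ]
  all_goals nlinarith [Nat.one_le_two_pow (n := n), Nat.one_le_pow n 3 (by omega)]

end FAC
namespace FAC

/-- continuation (evaluation-context) relation: biorthogonality -/
def ContRel (dir : Dir) (k : ℕ) (τ : PTy) (Cs : SEC) (Cu : UEC) : Prop :=
  Cs.ok ∧ Cu.ok ∧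
  ∀ i, i ≤ k → ∀ vs vu, SIsVal vs → UIsVal vu → ValRel dir i τ vs vu →
    Obs dir i (Cs.plug vs) (Cu.plug vu)

/-- term relation -/
def TermRel (dir : Dir) (k : ℕ) (τ : PTy) (t : STm) (u : UTm) : Prop :=
  ∀ Cs Cu, ContRel dir k τ Cs Cu → Obs dir k (Cs.plug t) (Cu.plug u)

/-- relation on closing substitutions instantiating a pseudo-context -/
def EnvRel (dir : Dir) (k : ℕ) (Γ : List PTy) (γs : ℕ → STm) (γu : ℕ → UTm) : Prop :=
  ∀ i τ, Γ[i]? = some τ →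
    SIsVal (γs i) ∧ UIsVal (γu i) ∧ ValRel dir k τ (γs i) (γu i)

/-- the logical relation `Γ̂ ⊢ t □ₙ t̲ : τ̂` on open terms, up to `n` steps -/
def LogRelN (dir : Dir) (n : ℕ) (Γ : List PTy) (t : STm) (u : UTm) (τ : PTy) : Prop :=
  HasTy (Γ.map repEmul) t (repEmul τ) ∧ u.ws Γ.length ∧
  ∀ k, k ≤ n → ∀ γs γu, EnvRel dir k Γ γs γu →
    TermRel dir k τ (t.subst γs) (u.subst γu)

/-- `Γ̂ ⊢ t □ t̲ : τ̂` : related up to any number of steps -/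
def LogRel (dir : Dir) (Γ : List PTy) (t : STm) (u : UTm) (τ : PTy) : Prop :=
  ∀ n, LogRelN dir n Γ t u τ

/-! ## Program contexts -/

inductive SPC : Type
  | hole
  | lam (τ : Ty) (C : SPC)
  | appL (C : SPC) (t : STm)
  | appR (t : STm) (C : SPC)
  | pairL (C : SPC) (t : STm)
  | pairR (t : STm) (C : SPC)
  | p1 (C : SPC)
  | p2 (C : SPC)
  | inl (C : SPC)
  | inr (C : SPC)
  | caseS (C : SPC) (t₁ t₂ : STm)
  | caseL (t : STm) (C : SPC) (t₂ : STm)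
  | caseR (t t₁ : STm) (C : SPC)
  | seqL (C : SPC) (t : STm)
  | seqR (t : STm) (C : SPC)
  | tifC (C : SPC) (t₁ t₂ : STm)
  | tifT (t : STm) (C : SPC) (t₂ : STm)
  | tifF (t t₁ : STm) (C : SPC)
  | fixt (a b : Ty) (C : SPC)

def SPC.plug : SPC → STm → STm
  | .hole, t => t
  | .lam τ C, t => .lam τ (C.plug t)
  | .appL C u, t => .app (C.plug t) u
  | .appR u C, t => .app u (C.plug t)
  | .pairL C u, t => .pair (C.plug t) u
  | .pairR u C, t => .pair u (C.plug t)
  | .p1 C, t => .p1 (C.plug t)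
  | .p2 C, t => .p2 (C.plug t)
  | .inl C, t => .inl (C.plug t)
  | .inr C, t => .inr (C.plug t)
  | .caseS C a b, t => .caseOf (C.plug t) a b
  | .caseL u C b, t => .caseOf u (C.plug t) b
  | .caseR u a C, t => .caseOf u a (C.plug t)
  | .seqL C u, t => .seq (C.plug t) u
  | .seqR u C, t => .seq u (C.plug t)
  | .tifC C a b, t => .tif (C.plug t) a b
  | .tifT u C b, t => .tif u (C.plug t) b
  | .tifF u a C, t => .tif u a (C.plug t)
  | .fixt a b C, t => .fixt a b (C.plug t)

/-- context typing `⊢ C : (Γ',τ') → (Γ,τ)` -/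
inductive SPCTy : SPC → List Ty → Ty → List Ty → Ty → Prop
  | hole {Γ τ} : SPCTy .hole Γ τ Γ τ
  | lam {C Γ' τ' Γ σ τ} : SPCTy C Γ' τ' (σ :: Γ) τ → SPCTy (.lam σ C) Γ' τ' Γ (.arr σ τ)
  | appL {C Γ' τ' Γ a b t} : SPCTy C Γ' τ' Γ (.arr a b) → HasTy Γ t a →
      SPCTy (.appL C t) Γ' τ' Γ b
  | appR {C Γ' τ' Γ a b t} : HasTy Γ t (.arr a b) → SPCTy C Γ' τ' Γ a →
      SPCTy (.appR t C) Γ' τ' Γ b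
  | pairL {C Γ' τ' Γ a b t} : SPCTy C Γ' τ' Γ a → HasTy Γ t b →
      SPCTy (.pairL C t) Γ' τ' Γ (.prod a b)
  | pairR {C Γ' τ' Γ a b t} : HasTy Γ t a → SPCTy C Γ' τ' Γ b →
      SPCTy (.pairR t C) Γ' τ' Γ (.prod a b)
  | p1 {C Γ' τ' Γ a b} : SPCTy C Γ' τ' Γ (.prod a b) → SPCTy (.p1 C) Γ' τ' Γ a
  | p2 {C Γ' τ' Γ a b} : SPCTy C Γ' τ' Γ (.prod a b) → SPCTy (.p2 C) Γ' τ' Γ b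
  | inl {C Γ' τ' Γ a b} : SPCTy C Γ' τ' Γ a → SPCTy (.inl C) Γ' τ' Γ (.sum a b)
  | inr {C Γ' τ' Γ a b} : SPCTy C Γ' τ' Γ b → SPCTy (.inr C) Γ' τ' Γ (.sum a b)
  | caseS {C Γ' τ' Γ a b τ t₁ t₂} : SPCTy C Γ' τ' Γ (.sum a b) →
      HasTy (a :: Γ) t₁ τ → HasTy (b :: Γ) t₂ τ → SPCTy (.caseS C t₁ t₂) Γ' τ' Γ τ
  | caseL {C Γ' τ' Γ a b τ t t₂} : HasTy Γ t (.sum a b) →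
      SPCTy C Γ' τ' (a :: Γ) τ → HasTy (b :: Γ) t₂ τ → SPCTy (.caseL t C t₂) Γ' τ' Γ τ
  | caseR {C Γ' τ' Γ a b τ t t₁} : HasTy Γ t (.sum a b) →
      HasTy (a :: Γ) t₁ τ → SPCTy C Γ' τ' (b :: Γ) τ → SPCTy (.caseR t t₁ C) Γ' τ' Γ τ
  | seqL {C Γ' τ' Γ τ t} : SPCTy C Γ' τ' Γ .unit → HasTy Γ t τ →
      SPCTy (.seqL C t) Γ' τ' Γ τ
  | seqR {C Γ' τ' Γ τ t} : HasTy Γ t .unit → SPCTy C Γ' τ' Γ τ →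
      SPCTy (.seqR t C) Γ' τ' Γ τ
  | tifC {C Γ' τ' Γ τ t₁ t₂} : SPCTy C Γ' τ' Γ .bool → HasTy Γ t₁ τ → HasTy Γ t₂ τ →
      SPCTy (.tifC C t₁ t₂) Γ' τ' Γ τ
  | tifT {C Γ' τ' Γ τ t t₂} : HasTy Γ t .bool → SPCTy C Γ' τ' Γ τ → HasTy Γ t₂ τ →
      SPCTy (.tifT t C t₂) Γ' τ' Γ τ
  | tifF {C Γ' τ' Γ τ t t₁} : HasTy Γ t .bool → HasTy Γ t₁ τ → SPCTy C Γ' τ' Γ τ →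
      SPCTy (.tifF t t₁ C) Γ' τ' Γ τ
  | fixt {C Γ' τ' Γ a b} : SPCTy C Γ' τ' Γ (.arr (.arr a b) (.arr a b)) →
      SPCTy (.fixt a b C) Γ' τ' Γ (.arr a b)

inductive UPC : Type
  | hole
  | lam (C : UPC)
  | appL (C : UPC) (t : UTm)
  | appR (t : UTm) (C : UPC)
  | pairL (C : UPC) (t : UTm)
  | pairR (t : UTm) (C : UPC)
  | p1 (C : UPC)
  | p2 (C : UPC)
  | inl (C : UPC)
  | inr (C : UPC)
  | caseS (C : UPC) (t₁ t₂ : UTm)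
  | caseL (t : UTm) (C : UPC) (t₂ : UTm)
  | caseR (t t₁ : UTm) (C : UPC)
  | seqL (C : UPC) (t : UTm)
  | seqR (t : UTm) (C : UPC)
  | tifC (C : UPC) (t₁ t₂ : UTm)
  | tifT (t : UTm) (C : UPC) (t₂ : UTm)
  | tifF (t t₁ : UTm) (C : UPC)

def UPC.plug : UPC → UTm → UTm
  | .hole, t => t
  | .lam C, t => .lam (C.plug t)
  | .appL C u, t => .app (C.plug t) u
  | .appR u C, t => .app u (C.plug t)
  | .pairL C u, t => .pair (C.plug t) u
  | .pairR u C, t => .pair u (C.plug t)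
  | .p1 C, t => .p1 (C.plug t)
  | .p2 C, t => .p2 (C.plug t)
  | .inl C, t => .inl (C.plug t)
  | .inr C, t => .inr (C.plug t)
  | .caseS C a b, t => .caseOf (C.plug t) a b
  | .caseL u C b, t => .caseOf u (C.plug t) b
  | .caseR u a C, t => .caseOf u a (C.plug t)
  | .seqL C u, t => .seq (C.plug t) u
  | .seqR u C, t => .seq u (C.plug t)
  | .tifC C a b, t => .tif (C.plug t) a b
  | .tifT u C b, t => .tif u (C.plug t) b
  | .tifF u a C, t => .tif u a (C.plug t)

/-- `UPCWs C m n` : context `C` maps terms with `m` free variables (the hole's scope)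
to terms with `n` free variables (`⊢ C : m → n`). -/
inductive UPCWs : UPC → ℕ → ℕ → Prop
  | hole {n} : UPCWs .hole n n
  | lam {C m n} : UPCWs C m (n+1) → UPCWs (.lam C) m n
  | appL {C m n t} : UPCWs C m n → UTm.ws t n → UPCWs (.appL C t) m n
  | appR {C m n t} : UTm.ws t n → UPCWs C m n → UPCWs (.appR t C) m n
  | pairL {C m n t} : UPCWs C m n → UTm.ws t n → UPCWs (.pairL C t) m n
  | pairR {C m n t} : UTm.ws t n → UPCWs C m n → UPCWs (.pairR t C) m n
  | p1 {C m n} : UPCWs C m n → UPCWs (.p1 C) m n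
  | p2 {C m n} : UPCWs C m n → UPCWs (.p2 C) m n
  | inl {C m n} : UPCWs C m n → UPCWs (.inl C) m n
  | inr {C m n} : UPCWs C m n → UPCWs (.inr C) m n
  | caseS {C m n t₁ t₂} : UPCWs C m n → UTm.ws t₁ (n+1) → UTm.ws t₂ (n+1) →
      UPCWs (.caseS C t₁ t₂) m n
  | caseL {C m n t t₂} : UTm.ws t n → UPCWs C m (n+1) → UTm.ws t₂ (n+1) →
      UPCWs (.caseL t C t₂) m n
  | caseR {C m n t t₁} : UTm.ws t n → UTm.ws t₁ (n+1) → UPCWs C m (n+1) →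
      UPCWs (.caseR t t₁ C) m n
  | seqL {C m n t} : UPCWs C m n → UTm.ws t n → UPCWs (.seqL C t) m n
  | seqR {C m n t} : UTm.ws t n → UPCWs C m n → UPCWs (.seqR t C) m n
  | tifC {C m n t₁ t₂} : UPCWs C m n → UTm.ws t₁ n → UTm.ws t₂ n →
      UPCWs (.tifC C t₁ t₂) m n
  | tifT {C m n t t₂} : UTm.ws t n → UPCWs C m n → UTm.ws t₂ n →
      UPCWs (.tifT t C t₂) m n
  | tifF {C m n t t₁} : UTm.ws t n → UTm.ws t₁ n → UPCWs C m n →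
      UPCWs (.tifF t t₁ C) m n

/-! ## Contextual equivalence -/

/-- `t₁ ≃ctx t₂ : τ` in λτ (for closed terms) -/
def SCtxEq (t₁ t₂ : STm) (τ : Ty) : Prop :=
  ∀ C τ', SPCTy C [] τ [] τ' → (SHalts (C.plug t₁) ↔ SHalts (C.plug t₂))

/-- `t̲₁ ≃ctx t̲₂` in λu (for closed terms) -/
def UCtxEq (u₁ u₂ : UTm) : Prop :=
  ∀ C, UPCWs C 0 0 → (UHalts (C.plug u₁) ↔ UHalts (C.plug u₂))

/-! ## Emulation of λu program contexts -/

/-- `emulateC n C̲` : back-translation of a λu program context into a λτ program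
context with hole of type `UVal_n`. -/
def emulateC (n : ℕ) : UPC → SPC
  | .hole => .hole
  | .lam C => .appR (downgrade n 1)
      (.inr (.inr (.inr (.inr (.inr (.lam (UValTy n) (emulateC n C)))))))
  | .appL C t => .appL (.appR (caseArrU n) (.appR (upgrade n 1) (emulateC n C))) (emulate n t)
  | .appR t C => .appR (.app (caseArrU n) (.app (upgrade n 1) (emulate n t))) (emulateC n C)
  | .pairL C t => .appR (downgrade n 1)
      (.inr (.inr (.inr (.inl (.pairL (emulateC n C) (emulate n t))))))
  | .pairR t C => .appR (downgrade n 1)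
      (.inr (.inr (.inr (.inl (.pairR (emulate n t) (emulateC n C))))))
  | .p1 C => .p1 (.appR (caseProdU n) (.appR (upgrade n 1) (emulateC n C)))
  | .p2 C => .p2 (.appR (caseProdU n) (.appR (upgrade n 1) (emulateC n C)))
  | .inl C => .appR (downgrade n 1) (.inr (.inr (.inr (.inr (.inl (.inl (emulateC n C)))))))
  | .inr C => .appR (downgrade n 1) (.inr (.inr (.inr (.inr (.inl (.inr (emulateC n C)))))))
  | .caseS C t₁ t₂ => .caseS (.appR (caseSumU n) (.appR (upgrade n 1) (emulateC n C)))
      (emulate n t₁) (emulate n t₂)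
  | .caseL t C t₂ => .caseL (.app (caseSumU n) (.app (upgrade n 1) (emulate n t)))
      (emulateC n C) (emulate n t₂)
  | .caseR t t₁ C => .caseR (.app (caseSumU n) (.app (upgrade n 1) (emulate n t)))
      (emulate n t₁) (emulateC n C)
  | .seqL C t => .seqL (.appR (caseUnitU n) (.appR (upgrade n 1) (emulateC n C))) (emulate n t)
  | .seqR t C => .seqR (.app (caseUnitU n) (.app (upgrade n 1) (emulate n t))) (emulateC n C)
  | .tifC C t₁ t₂ => .tifC (.appR (caseBoolU n) (.appR (upgrade n 1) (emulateC n C)))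
      (emulate n t₁) (emulate n t₂)
  | .tifT t C t₂ => .tifT (.app (caseBoolU n) (.app (upgrade n 1) (emulate n t)))
      (emulateC n C) (emulate n t₂)
  | .tifF t t₁ C => .tifF (.app (caseBoolU n) (.app (upgrade n 1) (emulate n t)))
      (emulate n t₁) (emulateC n C)

/-- the approximate back-translation `⟨⟨C̲⟩⟩_{τ;m} := emulate_{m+1}(C̲)[inject_{τ;m} ·]`,
as an operation plugging a λτ term into the back-translated context. -/
def backtrPlug (τ : Ty) (m : ℕ) (C : UPC) (t : STm) : STm :=
  (emulateC (m+1) C).plug (.app (injectTm m τ) t)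

end FAC


/-!
At level `a + 1`, `downgrade` and `upgrade` strip the tag of a `UVal` value, convert the payload
one level lower (a function payload is wrapped between the two conversions, the opposite one
acting on its argument) and restore the tag. Relatedness at `EmulDV` is thus transferred tag by
tag, the payloads being related only at smaller step indices; for a function payload this uses
that the term relation is closed under anti-reduction and under application of a function that
maps related values to related values. At level 0 both conversions return a constant, related
only in the imprecise case; in the precise case relatedness at an index below `m` never reaches
level 0, since every level consumes a step. Composing the continuation of a related term with
the conversion then gives the compatibility lemma.
-/

open Relation

namespace FAC

theorem liftS_eq_var {n : ℕ} {σ : ℕ → STm} (hσ : ∀ i < n, σ i = .var i) :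
    ∀ i < n + 1, liftS σ i = .var i
  | 0, _ => rfl
  | i + 1, hi => by simp [liftS, hσ i (by omega), STm.rename]

theorem liftR_eq_self {n : ℕ} {f : ℕ → ℕ} (hf : ∀ i < n, f i = i) :
    ∀ i < n + 1, liftR f i = i
  | 0, _ => rfl
  | i + 1, hi => by simp [liftR, hf i (by omega)]

theorem HasTy.subst_eq_self {Γ t τ} (h : HasTy Γ t τ) :
    ∀ {σ : ℕ → STm}, (∀ i < Γ.length, σ i = .var i) → t.subst σ = t := by
  induction h with
  | var h => intro σ hσ; exact hσ _ (List.getElem?_eq_some_iff.mp h).1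
  | lam _ ih => intro σ hσ; simp only [STm.subst, ih (liftS_eq_var hσ)]
  | caseOf _ _ _ ih ih₁ ih₂ =>
    intro σ hσ; simp only [STm.subst, ih hσ, ih₁ (liftS_eq_var hσ), ih₂ (liftS_eq_var hσ)]
  | _ => intro σ hσ; simp_all [STm.subst]

theorem HasTy.rename_eq_self {Γ t τ} (h : HasTy Γ t τ) :
    ∀ {f : ℕ → ℕ}, (∀ i < Γ.length, f i = i) → t.rename f = t := by
  induction h with
  | var h => intro f hf; simp [STm.rename, hf _ (List.getElem?_eq_some_iff.mp h).1]
  | lam _ ih => intro f hf; simp only [STm.rename, ih (liftR_eq_self hf)]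
  | caseOf _ _ _ ih ih₁ ih₂ =>
    intro f hf; simp only [STm.rename, ih hf, ih₁ (liftR_eq_self hf), ih₂ (liftR_eq_self hf)]
  | _ => intro f hf; simp_all [STm.rename]

theorem HasTy.subst_closed {t τ} (h : HasTy [] t τ) (σ : ℕ → STm) : t.subst σ = t :=
  h.subst_eq_self (by simp)

theorem HasTy.rename_closed {t τ} (h : HasTy [] t τ) (f : ℕ → ℕ) : t.rename f = t :=
  h.rename_eq_self (by simp)

theorem HasTy.weaken_append {Γ t τ} (h : HasTy Γ t τ) (Δ : List Ty) : HasTy (Γ ++ Δ) t τ := by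
  induction h with
  | var h => exact .var (by rw [List.getElem?_append_left (List.getElem?_eq_some_iff.mp h).1, h])
  | _ => constructor <;> assumption

theorem HasTy.weaken_closed {t τ} (h : HasTy [] t τ) (Δ : List Ty) : HasTy Δ t τ := by
  simpa using h.weaken_append Δ

theorem SStep.not_isVal {t t'} (h : SStep t t') : ¬ SIsVal t := by
  induction h <;> intro hv <;> cases hv <;> simp_all

theorem SStep.det {t a b} (ha : SStep t a) (hb : SStep t b) : a = b := by
  induction ha generalizing b <;> cases hb <;> try rfl
  all_goals try (exfalso; solve_by_elim [SStep.not_isVal])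
  all_goals (congr 1; solve_by_elim)

theorem SStep.plug {Cs : SEC} (hok : Cs.ok) {t t'} (h : SStep t t') :
    SStep (Cs.plug t) (Cs.plug t') := by
  induction Cs with
  | hole => exact h
  | appR _ _ ih => exact .app2 hok.1 (ih hok.2)
  | pairR _ _ ih => exact .pair2 hok.1 (ih hok.2)
  | _ => constructor; solve_by_elim

theorem reflTransGen_plug {Cs : SEC} (hok : Cs.ok) {t t'} (h : ReflTransGen SStep t t') :
    ReflTransGen SStep (Cs.plug t) (Cs.plug t') :=
  h.lift Cs.plug fun _ _ => SStep.plug hok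

theorem Obs.of_step {dir k t t' u} (h : SStep t t') (ho : Obs dir k t' u) : Obs dir k t u := by
  cases dir with
  | lt =>
    rintro ⟨_ | m, hm, v, hv_red, hv⟩
    · exact absurd (hv_red ▸ hv) h.not_isVal
    · obtain ⟨t'', h', hn⟩ := hv_red
      exact ho ⟨m, by omega, v, h.det h' ▸ hn, hv⟩
  | gt =>
    intro hu
    obtain ⟨m, v, hm, hv⟩ := ho hu
    exact ⟨m + 1, v, ⟨t', h, hm⟩, hv⟩

theorem Obs.of_reflTransGen {dir k t t' u} (h : ReflTransGen SStep t t') (ho : Obs dir k t' u) :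
    Obs dir k t u := by
  induction h using ReflTransGen.head_induction_on with
  | refl => exact ho
  | head hs _ ih => exact ih.of_step hs

def SEC.comp : SEC → SEC → SEC
  | .hole, D => D
  | .appL C t, D => .appL (C.comp D) t
  | .appR v C, D => .appR v (C.comp D)
  | .pairL C t, D => .pairL (C.comp D) t
  | .pairR v C, D => .pairR v (C.comp D)
  | .p1 C, D => .p1 (C.comp D)
  | .p2 C, D => .p2 (C.comp D)
  | .inl C, D => .inl (C.comp D)
  | .inr C, D => .inr (C.comp D)
  | .caseOf C a b, D => .caseOf (C.comp D) a b
  | .seq C t, D => .seq (C.comp D) t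
  | .tif C a b, D => .tif (C.comp D) a b
  | .fixt a b C, D => .fixt a b (C.comp D)

theorem SEC.comp_plug (C D : SEC) (t : STm) : (C.comp D).plug t = C.plug (D.plug t) := by
  induction C <;> simp_all [SEC.comp, SEC.plug]

theorem SEC.comp_ok {C D : SEC} (hC : C.ok) (hD : D.ok) : (C.comp D).ok := by
  induction C <;> simp_all [SEC.comp, SEC.ok]

theorem valRel_hasTy {dir k τ vs vu} (h : ValRel dir k τ vs vu) : HasTy [] vs (repEmul τ) := by
  rcases τ with _ | _ | _ | _ | _ | ⟨_ | n, p⟩ <;> rw [ValRel] at h <;> exact h.1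

theorem valRel_ws {dir k τ vs vu} (h : ValRel dir k τ vs vu) : vu.ws 0 := by
  rcases τ with _ | _ | _ | _ | _ | ⟨_ | n, p⟩ <;> rw [ValRel] at h <;> exact h.2.1

theorem valRel_isVal : ∀ (τ : PTy) {dir k vs vu}, ValRel dir k τ vs vu → SIsVal vs
  | .unit, _, _, _, _, h => by rw [ValRel] at h; rw [h.2.2.1]; exact .unit
  | .bool, _, _, _, _, h => by
    rw [ValRel] at h; rcases h.2.2 with ⟨rfl, -⟩ | ⟨rfl, -⟩
    exacts [.tt, .ff]
  | .prod _ _, _, _, _, _, h => by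
    rw [ValRel] at h; obtain ⟨-, -, _, _, _, _, rfl, -, s₁, s₂, -⟩ := h; exact .pair s₁ s₂
  | .sum _ _, _, _, _, _, h => by
    rw [ValRel] at h; rcases h.2.2 with ⟨_, _, rfl, -, s, -⟩ | ⟨_, _, rfl, -, s, -⟩
    exacts [.inl s, .inr s]
  | .arr _ _, _, _, _, _, h => by rw [ValRel] at h; obtain ⟨-, -, _, _, rfl, -⟩ := h; exact .lam
  | .emul 0 _, _, _, _, _, h => by rw [ValRel] at h; obtain ⟨-, -, rfl, -⟩ := h; exact .unit
  | .emul (n + 1) _, _, _, _, _, h => by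
    rw [ValRel] at h
    rcases h.2.2 with ⟨rfl, -⟩ | ⟨v, rfl, hv⟩ | ⟨v, rfl, hv⟩ | ⟨v, rfl, hv⟩ | ⟨v, rfl, hv⟩ |
      ⟨v, rfl, hv⟩
    exacts [.inl .unit, .inr (.inl (valRel_isVal _ hv)), .inr (.inr (.inl (valRel_isVal _ hv))),
      .inr (.inr (.inr (.inl (valRel_isVal _ hv)))),
      .inr (.inr (.inr (.inr (.inl (valRel_isVal _ hv))))),
      .inr (.inr (.inr (.inr (.inr (valRel_isVal _ hv)))))]
termination_by τ => τ.weight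
decreasing_by
  all_goals simp [PTy.weight, pow_succ]
  all_goals nlinarith [Nat.one_le_pow n 3 (by omega)]

section Tags

variable {dir : Dir} {k n : ℕ} {p : Prec} {v : STm} {vu : UTm}

theorem valRel_emul_succ_iff : ValRel dir k (.emul (n + 1) p) v vu ↔
    HasTy [] v (UValTy (n + 1)) ∧ vu.ws 0 ∧
      ((v = inUnk ∧ p = .imprecise) ∨
       (∃ w, v = inUnit w ∧ ValRel dir k .unit w vu) ∨
       (∃ w, v = inBool w ∧ ValRel dir k .bool w vu) ∨
       (∃ w, v = inProd w ∧ ValRel dir k (.prod (.emul n p) (.emul n p)) w vu) ∨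
       (∃ w, v = inSum w ∧ ValRel dir k (.sum (.emul n p) (.emul n p)) w vu) ∨
       (∃ w, v = inArr w ∧ ValRel dir k (.arr (.emul n p) (.emul n p)) w vu)) := by
  rw [ValRel]

theorem valRel_inUnk_iff : ValRel dir k (.emul (n + 1) p) inUnk vu ↔ vu.ws 0 ∧ p = .imprecise := by
  refine ⟨fun h => ?_, fun h => valRel_emul_succ_iff.2 ⟨.inl .unit, h.1, .inl ⟨rfl, h.2⟩⟩⟩
  obtain ⟨-, hws, h⟩ := valRel_emul_succ_iff.1 h
  simpa [hws, inUnk, inUnit, inBool, inProd, inSum, inArr] using h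

theorem valRel_inUnit_iff :
    ValRel dir k (.emul (n + 1) p) (inUnit v) vu ↔ ValRel dir k .unit v vu := by
  refine ⟨fun h => ?_, fun h => valRel_emul_succ_iff.2
    ⟨.inr (.inl (valRel_hasTy h)), valRel_ws h, .inr (.inl ⟨v, rfl, h⟩)⟩⟩
  obtain ⟨-, -, h⟩ := valRel_emul_succ_iff.1 h
  simpa [inUnk, inUnit, inBool, inProd, inSum, inArr] using h

theorem valRel_inBool_iff :
    ValRel dir k (.emul (n + 1) p) (inBool v) vu ↔ ValRel dir k .bool v vu := by
  refine ⟨fun h => ?_, fun h => valRel_emul_succ_iff.2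
    ⟨.inr (.inr (.inl (valRel_hasTy h))), valRel_ws h, .inr (.inr (.inl ⟨v, rfl, h⟩))⟩⟩
  obtain ⟨-, -, h⟩ := valRel_emul_succ_iff.1 h
  simpa [inUnk, inUnit, inBool, inProd, inSum, inArr] using h

theorem valRel_inProd_iff :
    ValRel dir k (.emul (n + 1) p) (inProd v) vu ↔
      ValRel dir k (.prod (.emul n p) (.emul n p)) v vu := by
  refine ⟨fun h => ?_, fun h => valRel_emul_succ_iff.2
    ⟨.inr (.inr (.inr (.inl (valRel_hasTy h)))), valRel_ws h,
      .inr (.inr (.inr (.inl ⟨v, rfl, h⟩)))⟩⟩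
  obtain ⟨-, -, h⟩ := valRel_emul_succ_iff.1 h
  simpa [inUnk, inUnit, inBool, inProd, inSum, inArr] using h

theorem valRel_inSum_iff :
    ValRel dir k (.emul (n + 1) p) (inSum v) vu ↔
      ValRel dir k (.sum (.emul n p) (.emul n p)) v vu := by
  refine ⟨fun h => ?_, fun h => valRel_emul_succ_iff.2
    ⟨.inr (.inr (.inr (.inr (.inl (valRel_hasTy h))))), valRel_ws h,
      .inr (.inr (.inr (.inr (.inl ⟨v, rfl, h⟩))))⟩⟩
  obtain ⟨-, -, h⟩ := valRel_emul_succ_iff.1 h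
  simpa [inUnk, inUnit, inBool, inProd, inSum, inArr] using h

theorem valRel_inArr_iff :
    ValRel dir k (.emul (n + 1) p) (inArr v) vu ↔
      ValRel dir k (.arr (.emul n p) (.emul n p)) v vu := by
  refine ⟨fun h => ?_, fun h => valRel_emul_succ_iff.2
    ⟨.inr (.inr (.inr (.inr (.inr (valRel_hasTy h))))), valRel_ws h,
      .inr (.inr (.inr (.inr (.inr ⟨v, rfl, h⟩))))⟩⟩
  obtain ⟨-, -, h⟩ := valRel_emul_succ_iff.1 h
  simpa [inUnk, inUnit, inBool, inProd, inSum, inArr] using h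

end Tags

theorem valRel_arr_iff {dir k A B vs vu} : ValRel dir k (.arr A B) vs vu ↔
    HasTy [] vs (repEmul (.arr A B)) ∧ vu.ws 0 ∧
      ∃ ts tu, vs = .lam (repEmul A) ts ∧ vu = .lam tu ∧
        ∀ j < k, ∀ vs' vu', SIsVal vs' → UIsVal vu' → ValRel dir j A vs' vu' →
          TermRel dir j B (ts.subst0 vs') (tu.subst0 vu') := by
  rw [ValRel]; simp only [TermRel, ContRel, and_imp]

def MapsValRel (dir : Dir) (k : ℕ) (f : STm) (A B : PTy) : Prop :=
  ∀ j < k, ∀ vs vu, ValRel dir j A vs vu →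
    ∃ ws, ReflTransGen SStep (.app f vs) ws ∧ SIsVal ws ∧ ValRel dir j B ws vu

section TermRel

variable {dir : Dir} {k : ℕ} {A B : PTy} {t t' f : STm} {u : UTm}

theorem TermRel.of_reflTransGen (h : ReflTransGen SStep t t') (ht : TermRel dir k A t' u) :
    TermRel dir k A t u :=
  fun _ _ hC => (ht _ _ hC).of_reflTransGen (reflTransGen_plug hC.1 h)

theorem ContRel.comp_app {Cs Cu} (hf : SIsVal f) (hmap : MapsValRel dir (k + 1) f A B)
    (hC : ContRel dir k B Cs Cu) : ContRel dir k A (Cs.comp (.appR f .hole)) Cu := by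
  obtain ⟨hCs, hCu, hobs⟩ := hC
  refine ⟨SEC.comp_ok hCs ⟨hf, trivial⟩, hCu, fun i hi vs vu _ hvu hrel => ?_⟩
  obtain ⟨ws, hred, hws, hrelw⟩ := hmap i (by omega) vs vu hrel
  rw [SEC.comp_plug]
  exact (hobs i hi ws vu hws hvu hrelw).of_reflTransGen (reflTransGen_plug hCs hred)

theorem TermRel.app (hf : SIsVal f) (hmap : MapsValRel dir (k + 1) f A B)
    (ht : TermRel dir k A t u) : TermRel dir k B (.app f t) u := fun _ _ hC => by
  simpa [SEC.comp_plug, SEC.plug] using ht _ _ (hC.comp_app hf hmap)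

end TermRel

section Transfer

variable {dir : Dir} {k : ℕ} {A B A' B' : PTy} {vu : UTm}

theorem ValRel.pair_congr {v₁ v₂ w₁ w₂ : STm} (h : ValRel dir k (.prod A B) (.pair v₁ v₂) vu)
    (hw₁ : SIsVal w₁) (hw₂ : SIsVal w₂)
    (ht₁ : HasTy [] w₁ (repEmul A')) (ht₂ : HasTy [] w₂ (repEmul B'))
    (h₁ : ∀ j < k, ∀ u, ValRel dir j A v₁ u → ValRel dir j A' w₁ u)
    (h₂ : ∀ j < k, ∀ u, ValRel dir j B v₂ u → ValRel dir j B' w₂ u) :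
    ValRel dir k (.prod A' B') (.pair w₁ w₂) vu := by
  rw [ValRel] at h ⊢
  obtain ⟨-, hws, _, _, u₁, u₂, ⟨⟩, rfl, -, -, hu₁, hu₂, hrel⟩ := h
  exact ⟨.pair ht₁ ht₂, hws, w₁, w₂, u₁, u₂, rfl, rfl, hw₁, hw₂, hu₁, hu₂,
    fun j hj => ⟨h₁ j hj _ (hrel j hj).1, h₂ j hj _ (hrel j hj).2⟩⟩

theorem ValRel.inl_congr {v w : STm} (h : ValRel dir k (.sum A B) (.inl v) vu)
    (hw : SIsVal w) (ht : HasTy [] w (repEmul A'))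
    (hvw : ∀ j < k, ∀ u, ValRel dir j A v u → ValRel dir j A' w u) :
    ValRel dir k (.sum A' B') (.inl w) vu := by
  rw [ValRel] at h ⊢
  obtain ⟨-, hws, ⟨_, u, ⟨⟩, rfl, -, hu, hrel⟩ | ⟨_, _, ⟨⟩, -⟩⟩ := h
  exact ⟨.inl ht, hws, .inl ⟨w, u, rfl, rfl, hw, hu, fun j hj => hvw j hj _ (hrel j hj)⟩⟩

theorem ValRel.inr_congr {v w : STm} (h : ValRel dir k (.sum A B) (.inr v) vu)
    (hw : SIsVal w) (ht : HasTy [] w (repEmul B'))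
    (hvw : ∀ j < k, ∀ u, ValRel dir j B v u → ValRel dir j B' w u) :
    ValRel dir k (.sum A' B') (.inr w) vu := by
  rw [ValRel] at h ⊢
  obtain ⟨-, hws, ⟨_, _, ⟨⟩, -⟩ | ⟨_, u, ⟨⟩, rfl, -, hu, hrel⟩⟩ := h
  exact ⟨.inr ht, hws, .inr ⟨w, u, rfl, rfl, hw, hu, fun j hj => hvw j hj _ (hrel j hj)⟩⟩

theorem ValRel.arr_wrap {g h v : STm} (hv : ValRel dir k (.arr A B) v vu)
    (hhV : SIsVal h)
    (hgTy : ∀ Γ, HasTy Γ g (.arr (repEmul A') (repEmul A)))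
    (hhTy : ∀ Γ, HasTy Γ h (.arr (repEmul B) (repEmul B')))
    (hg : MapsValRel dir k g A' A) (hh : MapsValRel dir k h B B') :
    ValRel dir k (.arr A' B') (.lam (repEmul A') (.app h (.app v (.app g (.var 0))))) vu := by
  obtain ⟨hvTy, hws, ts, tu, rfl, rfl, hbody⟩ := valRel_arr_iff.1 hv
  refine valRel_arr_iff.2 ⟨.lam (.app (hhTy _) (.app (hvTy.weaken_closed _) (.app (hgTy _)
    (.var rfl)))), hws, _, tu, rfl, rfl, fun j hj vs' vu' _ hvu' hrel => ?_⟩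
  obtain ⟨us, hred, hus, hrelus⟩ := hg j hj vs' vu' hrel
  have hsubst : (STm.app h (.app (.lam (repEmul A) ts) (.app g (.var 0)))).subst0 vs' =
      .app h (.app (.lam (repEmul A) ts) (.app g vs')) := by
    show STm.app (h.subst _) (.app ((STm.lam _ ts).subst _) (.app (g.subst _) vs')) = _
    rw [(hhTy []).subst_closed, (hgTy []).subst_closed, hvTy.subst_closed]
  rw [hsubst]
  refine .of_reflTransGen ?_ ((hbody j hj us vu' hus hvu' hrelus).app hhV
    fun i hi => hh i (by omega))
  exact (reflTransGen_plug (Cs := .appR h (.appR (.lam _ ts) .hole)) ⟨hhV, .lam, trivial⟩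
    hred).tail (.app2 hhV (.beta hus))

end Transfer

theorem SIsVal.iterate_inr {v : STm} (hv : SIsVal v) : ∀ i, SIsVal (STm.inr^[i] v)
  | 0 => hv
  | i + 1 => by rw [Function.iterate_succ_apply']; exact .inr (hv.iterate_inr i)

theorem canon_sum {v a b} (h : HasTy [] v (.sum a b)) (hv : SIsVal v) :
    (∃ w, v = .inl w ∧ SIsVal w ∧ HasTy [] w a) ∨ (∃ w, v = .inr w ∧ SIsVal w ∧ HasTy [] w b) := by
  cases hv <;> cases h
  · exact .inl ⟨_, rfl, ‹_›, ‹_›⟩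
  · exact .inr ⟨_, rfl, ‹_›, ‹_›⟩

theorem uval_cases {v : STm} {n : ℕ} (hv : SIsVal v) (h : HasTy [] v (UValTy (n + 1))) :
    v = inUnk ∨
    (∃ w, v = inUnit w ∧ SIsVal w ∧ HasTy [] w .unit) ∨
    (∃ w, v = inBool w ∧ SIsVal w ∧ HasTy [] w .bool) ∨
    (∃ w₁ w₂, v = inProd (.pair w₁ w₂) ∧ SIsVal w₁ ∧ SIsVal w₂ ∧
      HasTy [] w₁ (UValTy n) ∧ HasTy [] w₂ (UValTy n)) ∨
    (∃ w, v = inSum (.inl w) ∧ SIsVal w ∧ HasTy [] w (UValTy n)) ∨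
    (∃ w, v = inSum (.inr w) ∧ SIsVal w ∧ HasTy [] w (UValTy n)) ∨
    (∃ w, v = inArr w ∧ SIsVal w ∧ HasTy [] w (.arr (UValTy n) (UValTy n))) := by
  rcases canon_sum h hv with ⟨w, rfl, hw, ht⟩ | ⟨w, rfl, hw, ht⟩
  · left; cases hw <;> cases ht; rfl
  rcases canon_sum ht hw with ⟨w, rfl, hw, ht⟩ | ⟨w, rfl, hw, ht⟩
  · exact .inr (.inl ⟨w, rfl, hw, ht⟩)
  rcases canon_sum ht hw with ⟨w, rfl, hw, ht⟩ | ⟨w, rfl, hw, ht⟩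
  · exact .inr (.inr (.inl ⟨w, rfl, hw, ht⟩))
  rcases canon_sum ht hw with ⟨w, rfl, hw, ht⟩ | ⟨w, rfl, hw, ht⟩
  · cases hw <;> cases ht
    exact .inr (.inr (.inr (.inl ⟨_, _, rfl, ‹_›, ‹_›, ‹_›, ‹_›⟩)))
  rcases canon_sum ht hw with ⟨w, rfl, hw, ht⟩ | ⟨w, rfl, hw, ht⟩
  · rcases canon_sum ht hw with ⟨w, rfl, hw, ht⟩ | ⟨w, rfl, hw, ht⟩
    · exact .inr (.inr (.inr (.inr (.inl ⟨w, rfl, hw, ht⟩))))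
    · exact .inr (.inr (.inr (.inr (.inr (.inl ⟨w, rfl, hw, ht⟩)))))
  · exact .inr (.inr (.inr (.inr (.inr (.inr ⟨w, rfl, hw, ht⟩)))))

-- The tags of `UVal_{n+1}` are the nested injections `inr^[i] (inl _)` for `i < 5` and
-- `inr^[5] _`; `caseChain` is the matching nested case analysis.
def caseChain : List STm → STm → STm
  | [], r => r
  | l :: ls, r => .caseOf (.var 0) l (caseChain ls r)

section CaseChain

variable {ls : List STm} {r : STm}

theorem caseChain_subst_liftS (hls : ∀ l ∈ ls, ∀ σ, l.subst (liftS σ) = l)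
    (hr : ∀ σ, r.subst (liftS σ) = r) (σ : ℕ → STm) :
    (caseChain ls r).subst (liftS σ) = caseChain ls r := by
  induction ls generalizing σ with
  | nil => exact hr σ
  | cons l ls ih =>
    simp only [caseChain, STm.subst]
    rw [hls l (by simp), ih (fun l hl => hls l (by simp [hl]))]
    rfl

theorem caseChain_red_inl (hls : ∀ l ∈ ls, ∀ σ, l.subst (liftS σ) = l)
    (hr : ∀ σ, r.subst (liftS σ) = r) {v : STm} (hv : SIsVal v) :
    ∀ i (hi : i < ls.length),
      ReflTransGen SStep ((caseChain ls r).subst0 (STm.inr^[i] (.inl v))) (ls[i].subst0 v) := by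
  induction ls with
  | nil => intro i hi; simp at hi
  | cons l ls ih =>
    have hl : ∀ σ, l.subst (liftS σ) = l := hls l (by simp)
    have hls' : ∀ l ∈ ls, ∀ σ, l.subst (liftS σ) = l := fun l hl => hls l (by simp [hl])
    intro i hi
    rw [STm.subst0, caseChain, STm.subst, hl, caseChain_subst_liftS hls' hr]
    rcases i with _ | i
    · exact .single (.caseL hv)
    · rw [Function.iterate_succ_apply']
      exact .head (.caseR ((SIsVal.inl hv).iterate_inr i)) (ih hls' i (by simpa using hi))

theorem caseChain_red_last (hls : ∀ l ∈ ls, ∀ σ, l.subst (liftS σ) = l)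
    (hr : ∀ σ, r.subst (liftS σ) = r) {v : STm} (hv : SIsVal v) :
    ReflTransGen SStep ((caseChain ls r).subst0 (STm.inr^[ls.length] v)) (r.subst0 v) := by
  induction ls with
  | nil => rfl
  | cons l ls ih =>
    have hls' : ∀ l ∈ ls, ∀ σ, l.subst (liftS σ) = l := fun l hl => hls l (by simp [hl])
    rw [STm.subst0, caseChain, STm.subst, hls l (by simp), caseChain_subst_liftS hls' hr,
      List.length_cons, Function.iterate_succ_apply']
    exact .head (.caseR (hv.iterate_inr _)) (ih hls')

end CaseChain

def prodBranch (sm : STm) : STm :=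
  inProd (.pair (.app sm (.p1 (.var 0))) (.app sm (.p2 (.var 0))))

def sumBranch (sm : STm) : STm :=
  inSum (.caseOf (.var 0) (.inl (.app sm (.var 0))) (.inr (.app sm (.var 0))))

def arrBranch (sm op : STm) (z : Ty) : STm :=
  inArr (.lam z (.app sm (.app (.var 1) (.app op (.var 0)))))

def convBranches (sm : STm) : List STm :=
  [inUnk, inUnit (.var 0), inBool (.var 0), prodBranch sm, sumBranch sm]

def convFun (sm op : STm) (a c : ℕ) : STm :=
  .lam (UValTy (a + 1)) (caseChain (convBranches sm) (arrBranch sm op (UValTy c)))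

theorem downgrade_succ (m d : ℕ) :
    downgrade (m + 1) d = convFun (downgrade m d) (upgrade m d) (m + d) m := rfl

theorem upgrade_succ (m d : ℕ) :
    upgrade (m + 1) d = convFun (upgrade m d) (downgrade m d) m (m + d) := rfl

section ConvFun

variable {sm op v : STm} {a c : ℕ}

theorem hasTy_convFun (hsm : ∀ Γ, HasTy Γ sm (.arr (UValTy a) (UValTy c)))
    (hop : ∀ Γ, HasTy Γ op (.arr (UValTy c) (UValTy a))) (Γ : List Ty) :
    HasTy Γ (convFun sm op a c) (.arr (UValTy (a + 1)) (UValTy (c + 1))) := by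
  refine .lam ?_
  simp only [caseChain, convBranches, prodBranch, sumBranch, arrBranch]
  repeat' first | exact hsm _ | exact hop _ | exact .var rfl | constructor

theorem convBranches_subst_liftS (hs : ∀ σ, sm.subst σ = sm) :
    ∀ l ∈ convBranches sm, ∀ σ, l.subst (liftS σ) = l := by
  simp [convBranches, prodBranch, sumBranch, inUnk, inUnit, inBool, inProd, inSum, STm.subst,
    liftS, hs]

theorem arrBranch_subst_liftS (hs : ∀ σ, sm.subst σ = sm) (ho : ∀ σ, op.subst σ = op) (z : Ty)
    (σ : ℕ → STm) : (arrBranch sm op z).subst (liftS σ) = arrBranch sm op z := by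
  simp [arrBranch, inArr, STm.subst, liftS, STm.rename, hs, ho]

theorem convFun_red_branch (hs : ∀ σ, sm.subst σ = sm) (ho : ∀ σ, op.subst σ = op)
    (hv : SIsVal v) {i : ℕ} {l : STm} (hl : (convBranches sm)[i]? = some l) :
    ReflTransGen SStep (.app (convFun sm op a c) (STm.inr^[i] (.inl v))) (l.subst0 v) := by
  obtain ⟨hi, rfl⟩ := List.getElem?_eq_some_iff.1 hl
  exact .head (.beta ((SIsVal.inl hv).iterate_inr i))
    (caseChain_red_inl (convBranches_subst_liftS hs) (arrBranch_subst_liftS hs ho _) hv i hi)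

theorem convFun_red_prod (hs : ∀ σ, sm.subst σ = sm) (ho : ∀ σ, op.subst σ = op)
    (hsmV : SIsVal sm) {w₁ w₂ x₁ x₂ : STm} (hw₁ : SIsVal w₁) (hw₂ : SIsVal w₂)
    (hred₁ : ReflTransGen SStep (.app sm w₁) x₁) (hx₁ : SIsVal x₁)
    (hred₂ : ReflTransGen SStep (.app sm w₂) x₂) :
    ReflTransGen SStep (.app (convFun sm op a c) (inProd (.pair w₁ w₂)))
      (inProd (.pair x₁ x₂)) := by
  have h := convFun_red_branch (a := a) (c := c) hs ho (.pair hw₁ hw₂) (i := 3) rfl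
  simp only [prodBranch, inProd, STm.subst0, STm.subst, hs] at h
  refine h.trans ((reflTransGen_plug (Cs := .inr (.inr (.inr (.inl (.pairL .hole _))))) trivial
    (.head (.app2 hsmV (.p1V hw₁ hw₂)) hred₁)).trans ?_)
  exact reflTransGen_plug (Cs := .inr (.inr (.inr (.inl (.pairR x₁ .hole))))) ⟨hx₁, trivial⟩
    (.head (.app2 hsmV (.p2V hw₁ hw₂)) hred₂)

theorem convFun_red_inl (hs : ∀ σ, sm.subst σ = sm) (ho : ∀ σ, op.subst σ = op)
    {w x : STm} (hw : SIsVal w) (hred : ReflTransGen SStep (.app sm w) x) :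
    ReflTransGen SStep (.app (convFun sm op a c) (inSum (.inl w))) (inSum (.inl x)) := by
  have h := convFun_red_branch (a := a) (c := c) hs ho (.inl hw) (i := 4) rfl
  simp only [sumBranch, inSum, STm.subst0, STm.subst, liftS, hs] at h
  refine h.trans (reflTransGen_plug (Cs := .inr (.inr (.inr (.inr (.inl .hole))))) trivial
    (.head (.caseL hw) ?_))
  simp only [STm.subst0, STm.subst, hs]
  exact reflTransGen_plug (Cs := .inl .hole) trivial hred

theorem convFun_red_inr (hs : ∀ σ, sm.subst σ = sm) (ho : ∀ σ, op.subst σ = op)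
    {w x : STm} (hw : SIsVal w) (hred : ReflTransGen SStep (.app sm w) x) :
    ReflTransGen SStep (.app (convFun sm op a c) (inSum (.inr w))) (inSum (.inr x)) := by
  have h := convFun_red_branch (a := a) (c := c) hs ho (.inr hw) (i := 4) rfl
  simp only [sumBranch, inSum, STm.subst0, STm.subst, liftS, hs] at h
  refine h.trans (reflTransGen_plug (Cs := .inr (.inr (.inr (.inr (.inl .hole))))) trivial
    (.head (.caseR hw) ?_))
  simp only [STm.subst0, STm.subst, hs]
  exact reflTransGen_plug (Cs := .inr .hole) trivial hred

theorem convFun_red_arr (hs : ∀ σ, sm.subst σ = sm) (ho : ∀ σ, op.subst σ = op)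
    (hv : SIsVal v) (hvc : ∀ f, v.rename f = v) :
    ReflTransGen SStep (.app (convFun sm op a c) (inArr v))
      (inArr (.lam (UValTy c) (.app sm (.app v (.app op (.var 0)))))) := by
  refine .head (.beta (hv.iterate_inr 5)) ?_
  have e : (arrBranch sm op (UValTy c)).subst0 v =
      inArr (.lam (UValTy c) (.app sm (.app v (.app op (.var 0))))) := by
    simp [arrBranch, inArr, STm.subst0, STm.subst, liftS, hs, ho, hvc]
  rw [← e]
  exact caseChain_red_last (convBranches_subst_liftS hs) (arrBranch_subst_liftS hs ho _) hv

end ConvFun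

def ConvertsAt (dir : Dir) (p : Prec) (bound : ℕ) (f : STm) (a b : ℕ) (vs : STm) : Prop :=
  ∃ ws, ReflTransGen SStep (.app f vs) ws ∧ SIsVal ws ∧ HasTy [] ws (UValTy b) ∧
    ∀ k vu, (k < bound ∨ p = .imprecise) →
      ValRel dir k (.emul a p) vs vu → ValRel dir k (.emul b p) ws vu

def Converts (dir : Dir) (p : Prec) (bound : ℕ) (f : STm) (a b : ℕ) : Prop :=
  ∀ vs, SIsVal vs → HasTy [] vs (UValTy a) → ConvertsAt dir p bound f a b vs

theorem Converts.mapsValRel {dir p bound f a b k} (hf : Converts dir p bound f a b)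
    (hk : k ≤ bound ∨ p = .imprecise) : MapsValRel dir k f (.emul a p) (.emul b p) := by
  intro j hj vs vu h
  obtain ⟨ws, hred, hws, -, hrel⟩ := hf vs (valRel_isVal _ h) (valRel_hasTy h)
  exact ⟨ws, hred, hws, hrel j vu (hk.imp_left fun _ => by omega) h⟩

theorem hasTy_unkUVal (Γ : List Ty) : ∀ n, HasTy Γ (unkUVal n) (UValTy n)
  | 0 => .unit
  | _ + 1 => .inl .unit

theorem isVal_unkUVal : ∀ n, SIsVal (unkUVal n)
  | 0 => .unit
  | _ + 1 => .inl .unit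

theorem valRel_unkUVal {dir k p vu} (hp : p = .imprecise) (hws : vu.ws 0) :
    ∀ n, ValRel dir k (.emul n p) (unkUVal n) vu
  | 0 => by rw [ValRel]; exact ⟨.unit, hws, rfl, hp⟩
  | _ + 1 => valRel_inUnk_iff.2 ⟨hws, hp⟩

theorem converts_lam_unkUVal (dir p a b) : Converts dir p 0 (.lam (UValTy a) (unkUVal b)) a b := by
  intro vs hv _
  refine ⟨unkUVal b, .single ?_, isVal_unkUVal b, hasTy_unkUVal [] b, fun k vu hk h => ?_⟩
  · have h := SStep.beta (τ := UValTy a) (t := unkUVal b) hv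
    rwa [STm.subst0, (hasTy_unkUVal [] b).subst_closed] at h
  · exact valRel_unkUVal (hk.resolve_left (Nat.not_lt_zero k)) (valRel_ws h) b

section Converts

variable {dir : Dir} {p : Prec} {bound : ℕ} {sm op : STm} {a c : ℕ}

theorem convertsAt_inProd (hsm : Converts dir p bound sm a c) (hs : ∀ σ, sm.subst σ = sm)
    (ho : ∀ σ, op.subst σ = op) (hsmV : SIsVal sm) {w₁ w₂ : STm} (hw₁ : SIsVal w₁)
    (hw₂ : SIsVal w₂) (ht₁ : HasTy [] w₁ (UValTy a)) (ht₂ : HasTy [] w₂ (UValTy a)) :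
    ConvertsAt dir p (bound + 1) (convFun sm op a c) (a + 1) (c + 1) (inProd (.pair w₁ w₂)) := by
  obtain ⟨x₁, hred₁, hx₁, hxt₁, hrel₁⟩ := hsm w₁ hw₁ ht₁
  obtain ⟨x₂, hred₂, hx₂, hxt₂, hrel₂⟩ := hsm w₂ hw₂ ht₂
  refine ⟨_, convFun_red_prod hs ho hsmV hw₁ hw₂ hred₁ hx₁ hred₂,
    .inr (.inr (.inr (.inl (.pair hx₁ hx₂)))), .inr (.inr (.inr (.inl (.pair hxt₁ hxt₂)))),
    fun k vu hk h => ?_⟩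
  rw [valRel_inProd_iff] at h ⊢
  exact h.pair_congr hx₁ hx₂ hxt₁ hxt₂
    (fun j hj u => hrel₁ j u (hk.imp_left fun _ => by omega))
    (fun j hj u => hrel₂ j u (hk.imp_left fun _ => by omega))

theorem convertsAt_inSum_inl (hsm : Converts dir p bound sm a c) (hs : ∀ σ, sm.subst σ = sm)
    (ho : ∀ σ, op.subst σ = op) {w : STm} (hw : SIsVal w) (ht : HasTy [] w (UValTy a)) :
    ConvertsAt dir p (bound + 1) (convFun sm op a c) (a + 1) (c + 1) (inSum (.inl w)) := by
  obtain ⟨x, hred, hx, hxt, hrel⟩ := hsm w hw ht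
  refine ⟨_, convFun_red_inl hs ho hw hred, .inr (.inr (.inr (.inr (.inl (.inl hx))))),
    .inr (.inr (.inr (.inr (.inl (.inl hxt))))), fun k vu hk h => ?_⟩
  rw [valRel_inSum_iff] at h ⊢
  exact h.inl_congr hx hxt fun j hj u => hrel j u (hk.imp_left fun _ => by omega)

theorem convertsAt_inSum_inr (hsm : Converts dir p bound sm a c) (hs : ∀ σ, sm.subst σ = sm)
    (ho : ∀ σ, op.subst σ = op) {w : STm} (hw : SIsVal w) (ht : HasTy [] w (UValTy a)) :
    ConvertsAt dir p (bound + 1) (convFun sm op a c) (a + 1) (c + 1) (inSum (.inr w)) := by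
  obtain ⟨x, hred, hx, hxt, hrel⟩ := hsm w hw ht
  refine ⟨_, convFun_red_inr hs ho hw hred, .inr (.inr (.inr (.inr (.inl (.inr hx))))),
    .inr (.inr (.inr (.inr (.inl (.inr hxt))))), fun k vu hk h => ?_⟩
  rw [valRel_inSum_iff] at h ⊢
  exact h.inr_congr hx hxt fun j hj u => hrel j u (hk.imp_left fun _ => by omega)

theorem convertsAt_inArr (hsm : Converts dir p bound sm a c) (hop : Converts dir p bound op c a)
    (hsmTy : ∀ Γ, HasTy Γ sm (.arr (UValTy a) (UValTy c)))
    (hopTy : ∀ Γ, HasTy Γ op (.arr (UValTy c) (UValTy a))) (hsmV : SIsVal sm)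
    {w : STm} (hw : SIsVal w) (ht : HasTy [] w (.arr (UValTy a) (UValTy a))) :
    ConvertsAt dir p (bound + 1) (convFun sm op a c) (a + 1) (c + 1) (inArr w) := by
  refine ⟨_, convFun_red_arr (hsmTy []).subst_closed (hopTy []).subst_closed hw ht.rename_closed,
    .inr (.inr (.inr (.inr (.inr .lam)))), .inr (.inr (.inr (.inr (.inr
      (.lam (.app (hsmTy _) (.app (ht.weaken_closed _) (.app (hopTy _) (.var rfl))))))))),
    fun k vu hk h => ?_⟩
  rw [valRel_inArr_iff] at h ⊢
  have hk' : k ≤ bound ∨ p = .imprecise := hk.imp_left fun _ => by omega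
  exact h.arr_wrap hsmV hopTy hsmTy (hop.mapsValRel hk') (hsm.mapsValRel hk')

theorem converts_convFun (hsm : Converts dir p bound sm a c) (hop : Converts dir p bound op c a)
    (hsmTy : ∀ Γ, HasTy Γ sm (.arr (UValTy a) (UValTy c)))
    (hopTy : ∀ Γ, HasTy Γ op (.arr (UValTy c) (UValTy a))) (hsmV : SIsVal sm) :
    Converts dir p (bound + 1) (convFun sm op a c) (a + 1) (c + 1) := by
  have hs := (hsmTy []).subst_closed
  have ho := (hopTy []).subst_closed
  intro vs hv hty
  rcases uval_cases hv hty with rfl | ⟨w, rfl, hw, ht⟩ | ⟨w, rfl, hw, ht⟩ |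
    ⟨w₁, w₂, rfl, hw₁, hw₂, ht₁, ht₂⟩ | ⟨w, rfl, hw, ht⟩ | ⟨w, rfl, hw, ht⟩ | ⟨w, rfl, hw, ht⟩
  · exact ⟨_, convFun_red_branch hs ho .unit (i := 0) rfl, .inl .unit, .inl .unit,
      fun _ _ _ h => valRel_inUnk_iff.2 (valRel_inUnk_iff.1 h)⟩
  · exact ⟨_, convFun_red_branch hs ho hw (i := 1) rfl, .inr (.inl hw), .inr (.inl ht),
      fun _ _ _ h => valRel_inUnit_iff.2 (valRel_inUnit_iff.1 h)⟩
  · exact ⟨_, convFun_red_branch hs ho hw (i := 2) rfl, .inr (.inr (.inl hw)),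
      .inr (.inr (.inl ht)), fun _ _ _ h => valRel_inBool_iff.2 (valRel_inBool_iff.1 h)⟩
  · exact convertsAt_inProd hsm hs ho hsmV hw₁ hw₂ ht₁ ht₂
  · exact convertsAt_inSum_inl hsm hs ho hw ht
  · exact convertsAt_inSum_inr hsm hs ho hw ht
  · exact convertsAt_inArr hsm hop hsmTy hopTy hsmV hw ht

end Converts

theorem hasTy_updown (d : ℕ) : ∀ m,
    (∀ Γ, HasTy Γ (downgrade m d) (.arr (UValTy (m + d)) (UValTy m))) ∧
    (∀ Γ, HasTy Γ (upgrade m d) (.arr (UValTy m) (UValTy (m + d))))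
  | 0 => by
    simp only [Nat.zero_add]
    exact ⟨fun _ => .lam (hasTy_unkUVal _ 0), fun _ => .lam (hasTy_unkUVal _ d)⟩
  | m + 1 => by
    obtain ⟨hD, hU⟩ := hasTy_updown d m
    rw [downgrade_succ, upgrade_succ, show m + 1 + d = m + d + 1 by omega]
    exact ⟨hasTy_convFun hD hU, hasTy_convFun hU hD⟩

theorem isVal_downgrade (m d : ℕ) : SIsVal (downgrade m d) := by cases m <;> exact .lam

theorem isVal_upgrade (m d : ℕ) : SIsVal (upgrade m d) := by cases m <;> exact .lam

theorem converts_updown (dir : Dir) (p : Prec) (d : ℕ) : ∀ m,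
    Converts dir p m (downgrade m d) (m + d) m ∧ Converts dir p m (upgrade m d) m (m + d)
  | 0 => by
    simp only [Nat.zero_add]
    exact ⟨converts_lam_unkUVal dir p d 0, converts_lam_unkUVal dir p 0 d⟩
  | m + 1 => by
    obtain ⟨hD, hU⟩ := converts_updown dir p d m
    obtain ⟨hDTy, hUTy⟩ := hasTy_updown d m
    rw [downgrade_succ, upgrade_succ, show m + 1 + d = m + d + 1 by omega]
    exact ⟨converts_convFun hD hU hDTy hUTy (isVal_downgrade m d),
      converts_convFun hU hD hUTy hDTy (isVal_upgrade m d)⟩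

theorem LogRelN.app_of_converts {dir n Γ t u p bound f a b}
    (hf : Converts dir p bound f a b) (hfV : SIsVal f)
    (hfTy : ∀ Δ, HasTy Δ f (.arr (UValTy a) (UValTy b))) (hn : n < bound ∨ p = .imprecise)
    (h : LogRelN dir n Γ t u (.emul a p)) : LogRelN dir n Γ (.app f t) u (.emul b p) := by
  obtain ⟨hty, hws, hsem⟩ := h
  refine ⟨.app (hfTy _) hty, hws, fun k hk γs γu hγ => ?_⟩
  rw [STm.subst, (hfTy []).subst_closed]
  exact (hsem k hk γs γu hγ).app hfV (hf.mapsValRel (hn.imp_left fun _ => by omega))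

end FAC

open FAC in
/-- compatibility lemma for downgrade and upgrade. -/
theorem downgrade_upgrade_compat
    (dir : Dir) (n m d : ℕ) (p : Prec) (Γ : List PTy) (t : STm) (u : UTm)
    (hside : (n < m ∧ p = .precise) ∨ (dir = .lt ∧ p = .imprecise)) :
    (LogRelN dir n Γ t u (.emul (m+d) p) →
      LogRelN dir n Γ (.app (downgrade m d) t) u (.emul m p)) ∧
    (LogRelN dir n Γ t u (.emul m p) →
      LogRelN dir n Γ (.app (upgrade m d) t) u (.emul (m+d) p)) := by
  have hn : n < m ∨ p = .imprecise := hside.imp And.left And.right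
  obtain ⟨hD, hU⟩ := converts_updown dir p d m
  obtain ⟨hDTy, hUTy⟩ := hasTy_updown d m
  exact ⟨.app_of_converts hD (isVal_downgrade m d) hDTy hn,
    .app_of_converts hU (isVal_upgrade m d) hUTy hn⟩
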